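/- arXiv:2012.02709 — 5 statements merged into one kernel-verified Lean document; each statement's English description precedes it below -/
import Mathlib

section
/- Let π : {1,…,N} → I assign each index to a block. Suppose M ∈ ℝ^{N×N} satisfies M = Σ_{e∈E} M_e for a finite family of symmetric positive semidefinite matrices M_e, where for each e there exist two blocks i_e, j_e ∈ I such that (M_e)_{kl} = 0 unless both π(k) ∈ {i_e, j_e} and π(l) ∈ {i_e, j_e}. Define Ω ∈ ℝ^{N×N} by Ω_{ij} = 2·M_{ij} if π(i) = π(j) and Ω_{ij} = 0 otherwise (the block-diagonal part of 2M with respect to π). Then Ω − M is positive semidefinite. -/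
/-!
For a matrix `A` supported on the blocks `i` and `j`, keeping the two diagonal blocks and
negating the two off-diagonal ones is the congruence `A ↦ D A D` by the diagonal sign matrix
`D` that is `1` on block `i`, `-1` on block `j` and `0` elsewhere. Hence
`blockdiag(2A) - A = D A D` is positive semidefinite whenever `A` is, and summing over the
edges gives the claim, as taking the block-diagonal part is additive.
-/

open Matrix

namespace Matrix

variable {n ι R : Type*} [DecidableEq ι]

def blockDiagPart [AddZeroClass R] (π : n → ι) : Matrix n n R →+ Matrix n n R where
  toFun A := of fun k l => if π k = π l then A k l else 0
  map_zero' := by ext; simp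
  map_add' A B := by ext k l; by_cases h : π k = π l <;> simp [h]

@[simp]
lemma blockDiagPart_apply [AddZeroClass R] (π : n → ι) (A : Matrix n n R) (k l : n) :
    blockDiagPart π A k l = if π k = π l then A k l else 0 := rfl

variable [Ring R]

def twoBlockSign (π : n → ι) (i j : ι) (k : n) : R :=
  if π k = i then 1 else if π k = j then -1 else 0

lemma star_twoBlockSign [StarRing R] (π : n → ι) (i j : ι) :
    star (twoBlockSign π i j : n → R) = twoBlockSign π i j := by
  ext k
  simp only [Pi.star_apply, twoBlockSign]
  split_ifs <;> simp

variable [Fintype n] [DecidableEq n]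

lemma blockDiagPart_two_nsmul_sub_eq_diagonal_mul_mul_diagonal (π : n → ι) (i j : ι)
    {A : Matrix n n R}
    (hA : ∀ k l, A k l ≠ 0 → (π k = i ∨ π k = j) ∧ (π l = i ∨ π l = j)) :
    blockDiagPart π (2 • A) - A =
      diagonal (twoBlockSign π i j : n → R) * A * diagonal (twoBlockSign π i j) := by
  ext k l
  simp only [sub_apply, blockDiagPart_apply, two_nsmul, mul_diagonal, diagonal_mul, twoBlockSign]
  by_cases hkl : A k l = 0
  · simp [hkl]
  obtain ⟨hk, hl⟩ := hA k l hkl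
  split_ifs <;> simp_all

lemma PosSemidef.blockDiagPart_two_nsmul_sub [PartialOrder R] [StarRing R]
    (π : n → ι) (i j : ι) {A : Matrix n n R} (hA : A.PosSemidef)
    (hsupp : ∀ k l, A k l ≠ 0 → (π k = i ∨ π k = j) ∧ (π l = i ∨ π l = j)) :
    (blockDiagPart π (2 • A) - A).PosSemidef := by
  rw [blockDiagPart_two_nsmul_sub_eq_diagonal_mul_mul_diagonal π i j hsupp]
  simpa [diagonal_conjTranspose, star_twoBlockSign] using
    hA.conjTranspose_mul_mul_same (diagonal (twoBlockSign π i j))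

lemma posSemidef_blockDiagPart_two_nsmul_sum_sub {E : Type*} [PartialOrder R] [StarRing R]
    [AddLeftMono R] (π : n → ι) (A : E → Matrix n n R) (i j : E → ι) (s : Finset E)
    (hA : ∀ e ∈ s, (A e).PosSemidef)
    (hsupp : ∀ e ∈ s, ∀ k l, A e k l ≠ 0 →
      (π k = i e ∨ π k = j e) ∧ (π l = i e ∨ π l = j e)) :
    (blockDiagPart π (2 • ∑ e ∈ s, A e) - ∑ e ∈ s, A e).PosSemidef := by
  rw [Finset.smul_sum, map_sum, ← Finset.sum_sub_distrib]
  exact posSemidef_sum s fun e he ↦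
    (hA e he).blockDiagPart_two_nsmul_sub π (i e) (j e) (hsupp e he)

end Matrix

/-- If `M = Σ_{e∈E} M_e` with each `M_e` positive semidefinite and supported on (at most)
two blocks `i_e`, `j_e` of the partition `π`, then the block-diagonal part `Ω` of `2M`
with respect to `π` satisfies `Ω − M ⪰ 0`. -/
theorem blockDiag_double_sub_posSemidef {N : ℕ} {I E : Type*} [Fintype E] [DecidableEq I]
    (π : Fin N → I)
    (Me : E → Matrix (Fin N) (Fin N) ℝ)
    (ie je : E → I)
    (hpsd : ∀ e, (Me e).PosSemidef)
    (hsupp : ∀ e, ∀ k l : Fin N, Me e k l ≠ 0 →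
      (π k = ie e ∨ π k = je e) ∧ (π l = ie e ∨ π l = je e))
    (M : Matrix (Fin N) (Fin N) ℝ) (hM : M = ∑ e, Me e)
    (Ω : Matrix (Fin N) (Fin N) ℝ)
    (hΩ : ∀ i j : Fin N, Ω i j = if π i = π j then 2 * M i j else 0) :
    (Ω - M).PosSemidef := by
  have hΩ_blockDiagPart : Ω = blockDiagPart π (2 • M) := by
    ext k l
    simp [hΩ, two_mul]
  subst hΩ_blockDiagPart hM
  exact posSemidef_blockDiagPart_two_nsmul_sum_sub π Me ie je Finset.univ
    (fun e _ ↦ hpsd e) (fun e _ ↦ hsupp e)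
end

section
/- With the pose-graph data and the surrogate H built at a base configuration X⁰ = (t⁰, R⁰), there exists a symmetric positive semidefinite matrix Ω̃ ∈ ℝ^{(d+1)n×(d+1)n} such that for every configuration X = (t, R), identifying X with the matrix [t₁ ⋯ t_n R₁ ⋯ R_n] ∈ ℝ^{d×(d+1)n}, H(X) = F(X⁰) + ⟨∇F(X⁰), X − X⁰⟩ + (1/2)tr((X − X⁰) Ω̃ (X − X⁰)ᵀ), where ∇F(X⁰) is the (Fréchet) gradient of F at X⁰ and ⟨·,·⟩ is the trace inner product. -/
/-!
Write `R_{s(e)} R̃_e = X uₑ` and `R_{h(e)} = X wₑ` for fixed selector matrices `uₑ, wₑ` (likewise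
for the translation residual). Then `F(X) = ½ tr(X Ω_F Xᵀ)` with `Ω_F` a positively weighted sum of
the Gram matrices `(uₑ - wₑ)(uₑ - wₑ)ᵀ`, so `F` is a quadratic form with gradient `X⁰ Ω_F` and
`F(X) = F(X⁰) + ⟨X⁰ Ω_F, X - X⁰⟩ + ½ tr((X - X⁰) Ω_F (X - X⁰)ᵀ)`. Since `Pₑ = ½ X⁰ (uₑ + wₑ)`, the
parallelogram law gives `‖X uₑ - Pₑ‖² + ‖X wₑ - Pₑ‖² = ½ ‖X (uₑ - wₑ)‖² + ½ ‖(X - X⁰)(uₑ + wₑ)‖²`,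
so `H(X) = F(X) + ½ tr((X - X⁰) Ω_S (X - X⁰)ᵀ)` with `Ω_S` built from `(uₑ + wₑ)(uₑ + wₑ)ᵀ`.
Hence `Ω̃ = Ω_F + Ω_S` works.
-/

open Matrix

attribute [local instance] Matrix.frobeniusNormedAddCommGroup Matrix.frobeniusNormedSpace

noncomputable section PGO

/-- Column index type for the configuration matrix `[t₁ ⋯ t_n R₁ ⋯ R_n] ∈ ℝ^{d×(d+1)n}`:
one column for each translation `t_i`, and `d` columns for each rotation `R_i`. -/
abbrev PGOCols (n d : ℕ) := Fin n ⊕ Fin n × Fin d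

/-- The translation `t_i` (as a `d × 1` matrix) extracted from a configuration matrix. -/
def tPart {n d : ℕ} (X : Matrix (Fin d) (PGOCols n d) ℝ) (i : Fin n) :
    Matrix (Fin d) (Fin 1) ℝ :=
  Matrix.of fun r _ => X r (Sum.inl i)

/-- The rotation block `R_i` (as a `d × d` matrix) extracted from a configuration matrix. -/
def RPart {n d : ℕ} (X : Matrix (Fin d) (PGOCols n d) ℝ) (i : Fin n) :
    Matrix (Fin d) (Fin d) ℝ :=
  Matrix.of fun r c => X r (Sum.inr (i, c))

/-- The PGO objective
`F(X) = Σ_e (1/2)(κ_e‖R_{s(e)}R̃_e − R_{h(e)}‖² + τ_e‖R_{s(e)}t̃_e + t_{s(e)} − t_{h(e)}‖²)`. -/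
def pgoF {n d : ℕ} {E : Type*} [Fintype E] (s h : E → Fin n) (κ τ : E → ℝ)
    (Rm : E → Matrix (Fin d) (Fin d) ℝ) (tm : E → Matrix (Fin d) (Fin 1) ℝ)
    (X : Matrix (Fin d) (PGOCols n d) ℝ) : ℝ :=
  ∑ e, (1 / 2) * (κ e * ‖RPart X (s e) * Rm e - RPart X (h e)‖ ^ 2
    + τ e * ‖RPart X (s e) * tm e + tPart X (s e) - tPart X (h e)‖ ^ 2)

/-- `P_e = (1/2)R⁰_{s(e)}R̃_e + (1/2)R⁰_{h(e)}` built at the base configuration `X⁰`. -/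
def pgoP {n d : ℕ} {E : Type*} (s h : E → Fin n)
    (Rm : E → Matrix (Fin d) (Fin d) ℝ)
    (X0 : Matrix (Fin d) (PGOCols n d) ℝ) (e : E) : Matrix (Fin d) (Fin d) ℝ :=
  (1 / 2 : ℝ) • (RPart X0 (s e) * Rm e) + (1 / 2 : ℝ) • RPart X0 (h e)

/-- `p_e = (1/2)R⁰_{s(e)}t̃_e + (1/2)t⁰_{s(e)} + (1/2)t⁰_{h(e)}` built at the base `X⁰`. -/
def pgop {n d : ℕ} {E : Type*} (s h : E → Fin n)
    (tm : E → Matrix (Fin d) (Fin 1) ℝ)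
    (X0 : Matrix (Fin d) (PGOCols n d) ℝ) (e : E) : Matrix (Fin d) (Fin 1) ℝ :=
  (1 / 2 : ℝ) • (RPart X0 (s e) * tm e) + (1 / 2 : ℝ) • tPart X0 (s e)
    + (1 / 2 : ℝ) • tPart X0 (h e)

/-- The surrogate
`H(X) = Σ_e (κ_e(‖R_{s(e)}R̃_e − P_e‖² + ‖R_{h(e)} − P_e‖²)
        + τ_e(‖R_{s(e)}t̃_e + t_{s(e)} − p_e‖² + ‖t_{h(e)} − p_e‖²))`. -/
def pgoH {n d : ℕ} {E : Type*} [Fintype E] (s h : E → Fin n) (κ τ : E → ℝ)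
    (Rm : E → Matrix (Fin d) (Fin d) ℝ) (tm : E → Matrix (Fin d) (Fin 1) ℝ)
    (X0 X : Matrix (Fin d) (PGOCols n d) ℝ) : ℝ :=
  ∑ e, (κ e * (‖RPart X (s e) * Rm e - pgoP s h Rm X0 e‖ ^ 2
        + ‖RPart X (h e) - pgoP s h Rm X0 e‖ ^ 2)
    + τ e * (‖RPart X (s e) * tm e + tPart X (s e) - pgop s h tm X0 e‖ ^ 2
        + ‖tPart X (h e) - pgop s h tm X0 e‖ ^ 2))

namespace Matrix

section

variable {m p k : Type*} [Fintype m] [Fintype p] [Fintype k]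

theorem frobenius_norm_sq_eq_trace (A : Matrix m k ℝ) : ‖A‖ ^ 2 = trace (A * Aᵀ) := by
  have hsum : (0 : ℝ) ≤ ∑ i, ∑ j, ‖A i j‖ ^ (2 : ℝ) := by positivity
  rw [frobenius_norm_def, ← Real.rpow_natCast, ← Real.rpow_mul hsum]
  simp [trace, mul_apply, sq]

theorem frobenius_norm_mul_sq (X : Matrix m p ℝ) (M : Matrix p k ℝ) :
    ‖X * M‖ ^ 2 = trace (X * (M * Mᵀ) * Xᵀ) := by
  rw [frobenius_norm_sq_eq_trace, transpose_mul, Matrix.mul_assoc, Matrix.mul_assoc,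
    Matrix.mul_assoc]

theorem frobenius_norm_add_sq_add_norm_sub_sq (A B : Matrix m k ℝ) :
    ‖A + B‖ ^ 2 + ‖A - B‖ ^ 2 = 2 * (‖A‖ ^ 2 + ‖B‖ ^ 2) := by
  simp only [frobenius_norm_sq_eq_trace, transpose_add, transpose_sub, Matrix.add_mul,
    Matrix.mul_add, Matrix.sub_mul, Matrix.mul_sub, trace_add, trace_sub]
  ring

theorem frobenius_norm_half_smul_sq (A : Matrix m k ℝ) : ‖(1 / 2 : ℝ) • A‖ ^ 2 = ‖A‖ ^ 2 / 4 := by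
  rw [norm_smul, mul_pow, Real.norm_eq_abs, sq_abs]
  ring

theorem frobenius_norm_mul_sub_midpoint_sq_add (X X₀ : Matrix m p ℝ) (u w : Matrix p k ℝ) :
    ‖X * u - ((1 / 2 : ℝ) • (X₀ * u) + (1 / 2 : ℝ) • (X₀ * w))‖ ^ 2
        + ‖X * w - ((1 / 2 : ℝ) • (X₀ * u) + (1 / 2 : ℝ) • (X₀ * w))‖ ^ 2
      = (1 / 2) * ‖X * (u - w)‖ ^ 2 + (1 / 2) * ‖(X - X₀) * (u + w)‖ ^ 2 := by
  set a := (1 / 2 : ℝ) • ((X - X₀) * (u + w))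
  set b := (1 / 2 : ℝ) • (X * (u - w))
  have hu : X * u - ((1 / 2 : ℝ) • (X₀ * u) + (1 / 2 : ℝ) • (X₀ * w)) = a + b := by
    simp only [a, b, Matrix.mul_add, Matrix.mul_sub, Matrix.sub_mul]
    module
  have hw : X * w - ((1 / 2 : ℝ) • (X₀ * u) + (1 / 2 : ℝ) • (X₀ * w)) = a - b := by
    simp only [a, b, Matrix.mul_add, Matrix.mul_sub, Matrix.sub_mul]
    module
  rw [hu, hw, frobenius_norm_add_sq_add_norm_sub_sq, frobenius_norm_half_smul_sq,
    frobenius_norm_half_smul_sq]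
  ring

def traceForm (Q : Matrix p p ℝ) : Matrix m p ℝ →L[ℝ] Matrix m p ℝ →L[ℝ] ℝ :=
  LinearMap.toContinuousBilinearMap <| LinearMap.mk₂ ℝ (fun X Y => trace (X * Q * Yᵀ))
    (fun _ _ _ => by simp [Matrix.add_mul, trace_add]) (fun _ _ _ => by simp)
    (fun _ _ _ => by simp [Matrix.mul_add, trace_add]) (fun _ _ _ => by simp)

variable {Q : Matrix p p ℝ}

theorem traceForm_apply (X Y : Matrix m p ℝ) : traceForm Q X Y = trace (X * Q * Yᵀ) := rfl

theorem traceForm_add (Q' : Matrix p p ℝ) (X Y : Matrix m p ℝ) :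
    traceForm (Q + Q') X Y = traceForm Q X Y + traceForm Q' X Y := by
  simp only [traceForm_apply, Matrix.mul_add, Matrix.add_mul, trace_add]

theorem traceForm_eq_trace_transpose_mul (X Y : Matrix m p ℝ) :
    traceForm Q X Y = trace ((X * Q)ᵀ * Y) := by
  rw [traceForm_apply, ← trace_transpose, transpose_mul, transpose_transpose, trace_mul_comm]

theorem traceForm_comm (hQ : Q.IsSymm) (X Y : Matrix m p ℝ) :
    traceForm Q X Y = traceForm Q Y X := by
  rw [traceForm_apply, traceForm_apply, ← trace_transpose]
  simp [transpose_mul, hQ.eq, Matrix.mul_assoc]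

theorem traceForm_add_self (hQ : Q.IsSymm) (X Y : Matrix m p ℝ) :
    traceForm Q (X + Y) (X + Y) = traceForm Q X X + 2 * traceForm Q X Y + traceForm Q Y Y := by
  simp only [map_add, _root_.add_apply, traceForm_comm hQ Y X]
  ring

theorem hasFDerivAt_traceForm_self (hQ : Q.IsSymm) (X : Matrix m p ℝ) :
    HasFDerivAt (fun Y => traceForm Q Y Y) ((2 : ℝ) • traceForm Q X) X := by
  refine ((traceForm Q).hasFDerivAt_of_bilinear (hasFDerivAt_id X)
    (hasFDerivAt_id X)).congr_fderiv ?_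
  ext V
  change traceForm Q X V + traceForm Q V X = (2 : ℝ) * traceForm Q X V
  rw [traceForm_comm hQ V X, two_mul]

end

section

variable {p k l E : Type*} [Fintype k] [Fintype l] [Fintype E]

def weightedGram (a b : E → ℝ) (M : E → Matrix p k ℝ) (N : E → Matrix p l ℝ) : Matrix p p ℝ :=
  ∑ e, (a e • (M e * (M e)ᵀ) + b e • (N e * (N e)ᵀ))

variable (a b : E → ℝ) (M : E → Matrix p k ℝ) (N : E → Matrix p l ℝ)

theorem weightedGram_isSymm : (weightedGram a b M N).IsSymm := by
  simp [weightedGram, IsSymm, transpose_sum, transpose_mul]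

theorem weightedGram_posSemidef [Fintype p] (ha : ∀ e, 0 ≤ a e) (hb : ∀ e, 0 ≤ b e) :
    (weightedGram a b M N).PosSemidef := by
  refine posSemidef_sum _ fun e _ => .add (.smul ?_ (ha e)) (.smul ?_ (hb e)) <;>
    · rw [← conjTranspose_eq_transpose_of_trivial]
      exact posSemidef_self_mul_conjTranspose _

theorem traceForm_weightedGram {m : Type*} [Fintype m] [Fintype p] (X : Matrix m p ℝ) :
    traceForm (weightedGram a b M N) X X = ∑ e, (a e * ‖X * M e‖ ^ 2 + b e * ‖X * N e‖ ^ 2) := by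
  simp only [traceForm_apply, weightedGram, frobenius_norm_mul_sq, Matrix.mul_sum, Matrix.sum_mul,
    trace_sum, Matrix.mul_add, Matrix.add_mul, Matrix.mul_smul, Matrix.smul_mul, trace_add,
    trace_smul, smul_eq_mul]

end

end Matrix

section PoseGraph

variable {n d : ℕ} {E : Type*}

def rotationSelector (d : ℕ) (i : Fin n) : Matrix (PGOCols n d) (Fin d) ℝ :=
  Matrix.of fun q c => if q = Sum.inr (i, c) then 1 else 0

def translationSelector (d : ℕ) (i : Fin n) : Matrix (PGOCols n d) (Fin 1) ℝ :=
  Matrix.of fun q _ => if q = Sum.inl i then 1 else 0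

theorem RPart_eq_mul (X : Matrix (Fin d) (PGOCols n d) ℝ) (i : Fin n) :
    RPart X i = X * rotationSelector d i := by
  ext r c
  simp [RPart, rotationSelector, mul_apply]

theorem tPart_eq_mul (X : Matrix (Fin d) (PGOCols n d) ℝ) (i : Fin n) :
    tPart X i = X * translationSelector d i := by
  ext r c
  simp [tPart, translationSelector, mul_apply]

def sourceRotation (s : E → Fin n) (Rm : E → Matrix (Fin d) (Fin d) ℝ) (e : E) :
    Matrix (PGOCols n d) (Fin d) ℝ :=
  rotationSelector d (s e) * Rm e

def sourceTranslation (s : E → Fin n) (tm : E → Matrix (Fin d) (Fin 1) ℝ) (e : E) :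
    Matrix (PGOCols n d) (Fin 1) ℝ :=
  rotationSelector d (s e) * tm e + translationSelector d (s e)

variable (s h : E → Fin n) (κ τ : E → ℝ) (Rm : E → Matrix (Fin d) (Fin d) ℝ)
  (tm : E → Matrix (Fin d) (Fin 1) ℝ) (X : Matrix (Fin d) (PGOCols n d) ℝ) (e : E)

theorem mul_sourceRotation : X * sourceRotation s Rm e = RPart X (s e) * Rm e := by
  rw [sourceRotation, RPart_eq_mul, Matrix.mul_assoc]

theorem mul_sourceTranslation :
    X * sourceTranslation s tm e = RPart X (s e) * tm e + tPart X (s e) := by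
  rw [sourceTranslation, RPart_eq_mul, tPart_eq_mul, Matrix.mul_add, Matrix.mul_assoc]

theorem pgoP_eq : pgoP s h Rm X e
    = (1 / 2 : ℝ) • (X * sourceRotation s Rm e) + (1 / 2 : ℝ) • (X * rotationSelector d (h e)) := by
  rw [pgoP, mul_sourceRotation, RPart_eq_mul X (h e)]

theorem pgop_eq : pgop s h tm X e
    = (1 / 2 : ℝ) • (X * sourceTranslation s tm e)
      + (1 / 2 : ℝ) • (X * translationSelector d (h e)) := by
  rw [pgop, mul_sourceTranslation, tPart_eq_mul X (h e), smul_add]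

variable [Fintype E]

def pgoGram : Matrix (PGOCols n d) (PGOCols n d) ℝ :=
  weightedGram κ τ (fun e => sourceRotation s Rm e - rotationSelector d (h e))
    (fun e => sourceTranslation s tm e - translationSelector d (h e))

def pgoProximalGram : Matrix (PGOCols n d) (PGOCols n d) ℝ :=
  weightedGram κ τ (fun e => sourceRotation s Rm e + rotationSelector d (h e))
    (fun e => sourceTranslation s tm e + translationSelector d (h e))

theorem pgoGram_isSymm : (pgoGram s h κ τ Rm tm).IsSymm :=
  weightedGram_isSymm _ _ _ _

theorem pgoF_eq_traceForm :
    pgoF s h κ τ Rm tm X = (1 / 2) * traceForm (pgoGram s h κ τ Rm tm) X X := by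
  rw [pgoGram, traceForm_weightedGram, Finset.mul_sum]
  refine Finset.sum_congr rfl fun e _ => ?_
  rw [Matrix.mul_sub, Matrix.mul_sub, mul_sourceRotation, mul_sourceTranslation, ← RPart_eq_mul,
    ← tPart_eq_mul, add_sub_assoc]

theorem pgoH_eq_pgoF_add (X₀ : Matrix (Fin d) (PGOCols n d) ℝ) :
    pgoH s h κ τ Rm tm X₀ X = pgoF s h κ τ Rm tm X
      + (1 / 2) * traceForm (pgoProximalGram s h κ τ Rm tm) (X - X₀) (X - X₀) := by
  rw [pgoF_eq_traceForm, pgoGram, pgoProximalGram, traceForm_weightedGram, traceForm_weightedGram,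
    Finset.mul_sum, Finset.mul_sum, ← Finset.sum_add_distrib, pgoH]
  refine Finset.sum_congr rfl fun e _ => ?_
  rw [pgoP_eq, pgop_eq, ← mul_sourceRotation, ← mul_sourceTranslation, RPart_eq_mul, tPart_eq_mul,
    frobenius_norm_mul_sub_midpoint_sq_add, frobenius_norm_mul_sub_midpoint_sq_add]
  ring

theorem hasFDerivAt_pgoF (X₀ : Matrix (Fin d) (PGOCols n d) ℝ) :
    HasFDerivAt (pgoF s h κ τ Rm tm) (traceForm (pgoGram s h κ τ Rm tm) X₀) X₀ := by
  rw [funext (pgoF_eq_traceForm s h κ τ Rm tm ·)]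
  refine ((hasFDerivAt_traceForm_self (pgoGram_isSymm s h κ τ Rm tm) X₀).const_mul
    (1 / 2 : ℝ)).congr_fderiv (ContinuousLinearMap.ext fun V => ?_)
  show (1 / 2 : ℝ) * (2 * traceForm (pgoGram s h κ τ Rm tm) X₀ V)
    = traceForm (pgoGram s h κ τ Rm tm) X₀ V
  ring

end PoseGraph

theorem pgo_surrogate_eq_first_order_plus_quadratic_general {n d : ℕ} {E : Type*} [Fintype E]
    (s h : E → Fin n) (κ τ : E → ℝ) (hκ : ∀ e, 0 < κ e) (hτ : ∀ e, 0 < τ e)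
    (Rm : E → Matrix (Fin d) (Fin d) ℝ)
    (tm : E → Matrix (Fin d) (Fin 1) ℝ)
    (X0 : Matrix (Fin d) (PGOCols n d) ℝ) :
    ∃ Ω : Matrix (PGOCols n d) (PGOCols n d) ℝ, Ω.PosSemidef ∧
      ∃ G : Matrix (Fin d) (PGOCols n d) ℝ,
        DifferentiableAt ℝ (pgoF s h κ τ Rm tm) X0 ∧
        (∀ V : Matrix (Fin d) (PGOCols n d) ℝ,
          fderiv ℝ (pgoF s h κ τ Rm tm) X0 V = Matrix.trace (Gᵀ * V)) ∧
        ∀ X : Matrix (Fin d) (PGOCols n d) ℝ,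
          pgoH s h κ τ Rm tm X0 X =
            pgoF s h κ τ Rm tm X0 + Matrix.trace (Gᵀ * (X - X0))
              + (1 / 2) * Matrix.trace ((X - X0) * Ω * (X - X0)ᵀ) := by
  set Q := pgoGram s h κ τ Rm tm
  set Q' := pgoProximalGram s h κ τ Rm tm
  have hκ₀ e := (hκ e).le
  have hτ₀ e := (hτ e).le
  have hF := hasFDerivAt_pgoF s h κ τ Rm tm X0
  refine ⟨Q + Q', (weightedGram_posSemidef _ _ _ _ hκ₀ hτ₀).add
    (weightedGram_posSemidef _ _ _ _ hκ₀ hτ₀), X0 * Q, hF.differentiableAt,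
    fun V => by rw [hF.fderiv, traceForm_eq_trace_transpose_mul], fun X => ?_⟩
  obtain ⟨V, rfl⟩ : ∃ V, X = X0 + V := ⟨X - X0, by abel⟩
  rw [← traceForm_eq_trace_transpose_mul, ← traceForm_apply, traceForm_add, pgoH_eq_pgoF_add,
    pgoF_eq_traceForm, pgoF_eq_traceForm, add_sub_cancel_left,
    traceForm_add_self (pgoGram_isSymm s h κ τ Rm tm)]
  ring

/-- Theorem 1 of the paper: the surrogate `H` built at `X⁰` equals the first-order
expansion of `F` at `X⁰` plus a quadratic form given by a symmetric positive semidefinite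
matrix `Ω̃ ∈ ℝ^{(d+1)n×(d+1)n}`; here `G = ∇F(X⁰)` is the (Fréchet) gradient of `F` at
`X⁰` with respect to the trace (Frobenius) inner product. -/
theorem pgo_surrogate_eq_first_order_plus_quadratic {n d : ℕ} {E : Type*} [Fintype E]
    (s h : E → Fin n) (κ τ : E → ℝ) (hκ : ∀ e, 0 < κ e) (hτ : ∀ e, 0 < τ e)
    (Rm : E → Matrix (Fin d) (Fin d) ℝ) (hRm : ∀ e, Rm e * (Rm e)ᵀ = 1)
    (tm : E → Matrix (Fin d) (Fin 1) ℝ)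
    (X0 : Matrix (Fin d) (PGOCols n d) ℝ) :
    ∃ Ω : Matrix (PGOCols n d) (PGOCols n d) ℝ, Ω.PosSemidef ∧
      ∃ G : Matrix (Fin d) (PGOCols n d) ℝ,
        DifferentiableAt ℝ (pgoF s h κ τ Rm tm) X0 ∧
        (∀ V : Matrix (Fin d) (PGOCols n d) ℝ,
          fderiv ℝ (pgoF s h κ τ Rm tm) X0 V = Matrix.trace (Gᵀ * V)) ∧
        ∀ X : Matrix (Fin d) (PGOCols n d) ℝ,
          pgoH s h κ τ Rm tm X0 X =
            pgoF s h κ τ Rm tm X0 + Matrix.trace (Gᵀ * (X - X0))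
              + (1 / 2) * Matrix.trace ((X - X0) * Ω * (X - X0)ᵀ) :=
  pgo_surrogate_eq_first_order_plus_quadratic_general s h κ τ hκ hτ Rm tm X0

end PGO
end

section
/- With the pose-graph data and the surrogate H built at a base configuration X⁰ = (t⁰, R⁰), the surrogate is a global upper bound of the PGO objective: H(X) ≥ F(X) for every configuration X = (t, R), and H(X⁰) = F(X⁰). -/
open Matrix

attribute [local instance] Matrix.frobeniusNormedAddCommGroup Matrix.frobeniusNormedSpace

noncomputable section PGO

lemma frob_norm_sq {d m : ℕ} (A : Matrix (Fin d) (Fin m) ℝ) :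
    ‖A‖ ^ 2 = ∑ i, ∑ j, (A i j) ^ 2 := by
  have hS : (0:ℝ) ≤ ∑ i, ∑ j, ‖A i j‖ ^ (2 : ℝ) := by
    positivity
  rw [Matrix.frobenius_norm_def]
  rw [← Real.rpow_natCast _ 2, ← Real.rpow_mul hS]
  norm_num

lemma midpoint_key {d m : ℕ} (A B P : Matrix (Fin d) (Fin m) ℝ) :
    ‖A - P‖ ^ 2 + ‖B - P‖ ^ 2
      = (1/2) * ‖A - B‖ ^ 2 + 2 * ‖P - ((1/2:ℝ) • A + (1/2:ℝ) • B)‖ ^ 2 := by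
  simp only [frob_norm_sq, Finset.mul_sum, ← Finset.sum_add_distrib]
  refine Finset.sum_congr rfl fun i _ => Finset.sum_congr rfl fun j _ => ?_
  simp [Matrix.sub_apply, Matrix.add_apply, Matrix.smul_apply, smul_eq_mul]
  ring

lemma midpoint_ge {d m : ℕ} (A B P : Matrix (Fin d) (Fin m) ℝ) :
    (1/2) * ‖A - B‖ ^ 2 ≤ ‖A - P‖ ^ 2 + ‖B - P‖ ^ 2 := by
  rw [midpoint_key A B P]
  nlinarith [sq_nonneg ‖P - ((1/2:ℝ) • A + (1/2:ℝ) • B)‖]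

lemma midpoint_eq {d m : ℕ} (A B : Matrix (Fin d) (Fin m) ℝ) :
    ‖A - ((1/2:ℝ) • A + (1/2:ℝ) • B)‖ ^ 2 + ‖B - ((1/2:ℝ) • A + (1/2:ℝ) • B)‖ ^ 2
      = (1/2) * ‖A - B‖ ^ 2 := by
  rw [midpoint_key]; simp

/-- Upper-bound content of Theorem 2(1) of the paper: the surrogate `H` built at the base
configuration `X⁰` is a global upper bound of the PGO objective `F`, with equality at `X⁰`. -/
theorem pgo_surrogate_upper_bound {n d : ℕ} {E : Type*} [Fintype E]
    (s h : E → Fin n) (κ τ : E → ℝ) (hκ : ∀ e, 0 < κ e) (hτ : ∀ e, 0 < τ e)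
    (Rm : E → Matrix (Fin d) (Fin d) ℝ) (hRm : ∀ e, Rm e * (Rm e)ᵀ = 1)
    (tm : E → Matrix (Fin d) (Fin 1) ℝ)
    (X0 : Matrix (Fin d) (PGOCols n d) ℝ) :
    (∀ X : Matrix (Fin d) (PGOCols n d) ℝ,
      pgoF s h κ τ Rm tm X ≤ pgoH s h κ τ Rm tm X0 X) ∧
    pgoH s h κ τ Rm tm X0 X0 = pgoF s h κ τ Rm tm X0 := by
  constructor
  · intro X
    refine Finset.sum_le_sum fun e _ => ?_
    have h1 := midpoint_ge (RPart X (s e) * Rm e) (RPart X (h e)) (pgoP s h Rm X0 e)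
    have h2 := midpoint_ge (RPart X (s e) * tm e + tPart X (s e)) (tPart X (h e))
      (pgop s h tm X0 e)
    have h1' := mul_le_mul_of_nonneg_left h1 (hκ e).le
    have h2' := mul_le_mul_of_nonneg_left h2 (hτ e).le
    ring_nf
    ring_nf at h1' h2'
    linarith
  · refine Finset.sum_congr rfl fun e _ => ?_
    have hP : pgoP s h Rm X0 e
        = (1/2:ℝ) • (RPart X0 (s e) * Rm e) + (1/2:ℝ) • RPart X0 (h e) := rfl
    have hp : pgop s h tm X0 e
        = (1/2:ℝ) • (RPart X0 (s e) * tm e + tPart X0 (s e))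
          + (1/2:ℝ) • tPart X0 (h e) := by
      simp [pgop, smul_add, add_assoc]
    have e1 := midpoint_eq (RPart X0 (s e) * Rm e) (RPart X0 (h e))
    have e2 := midpoint_eq (RPart X0 (s e) * tm e + tPart X0 (s e)) (tPart X0 (h e))
    rw [hP, hp, e1, e2]
    ring

end PGO
end

section
/- Let (x_k)_{k≥0} be a sequence in a real normed space, let F be a real-valued function defined on the sequence with (F(x_k)) bounded below, let η ∈ (0, 1] and φ > 0, and let (f_k) be the real sequence with f_0 = F(x_0) and f_{k+1} = (1 − η)f_k + η·F(x_{k+1}). If F(x_{k+1}) ≤ f_k − φ·‖x_{k+1} − x_k‖² for every k, then ‖x_{k+1} − x_k‖ → 0 as k → ∞. -/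
open Filter

/-- Theorem 4(2),(4), abstract form: if each accepted iterate satisfies
`F(x_{k+1}) ≤ f_k − φ‖x_{k+1} − x_k‖²` where `f_{k+1} = (1 − η)f_k + η·F(x_{k+1})`,
`f_0 = F(x_0)`, `(F(x_k))` is bounded below, `η ∈ (0, 1]` and `φ > 0`, then
`‖x_{k+1} − x_k‖ → 0`. -/
theorem step_lengths_vanish {V : Type*} [NormedAddCommGroup V]
    (x : ℕ → V) (F : V → ℝ)
    (hbdd : BddBelow (Set.range fun k => F (x k)))
    (η : ℝ) (hη0 : 0 < η) (hη1 : η ≤ 1) (φ : ℝ) (hφ : 0 < φ)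
    (f : ℕ → ℝ) (hf0 : f 0 = F (x 0))
    (hf : ∀ k, f (k + 1) = (1 - η) * f k + η * F (x (k + 1)))
    (hdec : ∀ k, F (x (k + 1)) ≤ f k - φ * ‖x (k + 1) - x k‖ ^ 2) :
    Tendsto (fun k => ‖x (k + 1) - x k‖) atTop (nhds 0) := by
  obtain ⟨m, hm⟩ := hbdd
  have hm' : ∀ k, m ≤ F (x k) := fun k => hm ⟨k, rfl⟩
  -- key step inequality
  have hstep : ∀ k, f (k + 1) ≤ f k - η * φ * ‖x (k + 1) - x k‖ ^ 2 := by
    intro k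
    have := hdec k
    have h := hf k
    nlinarith [this, sq_nonneg ‖x (k + 1) - x k‖]
  -- f bounded below by m
  have hflb : ∀ k, m ≤ f k := by
    intro k
    induction k with
    | zero => rw [hf0]; exact hm' 0
    | succ n ih =>
      rw [hf n]
      nlinarith [hm' (n + 1)]
  -- f antitone
  have hanti : Antitone f := by
    apply antitone_nat_of_succ_le
    intro k
    have := hstep k
    nlinarith [mul_nonneg (mul_pos hη0 hφ).le (sq_nonneg ‖x (k + 1) - x k‖)]
  -- f converges
  have hL := tendsto_atTop_ciInf hanti ⟨m, fun y ⟨k, hk⟩ => hk ▸ hflb k⟩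
  have hdiff : Tendsto (fun k => f k - f (k + 1)) atTop (nhds 0) := by
    have h2 : Tendsto (fun k => f (k + 1)) atTop (nhds (⨅ i, f i)) :=
      hL.comp (tendsto_add_atTop_nat 1)
    simpa using hL.sub h2
  -- squared norms tend to 0
  have hsq : Tendsto (fun k => ‖x (k + 1) - x k‖ ^ 2) atTop (nhds 0) := by
    have hub : ∀ k, ‖x (k + 1) - x k‖ ^ 2 ≤ (f k - f (k + 1)) / (η * φ) := by
      intro k
      rw [le_div_iff₀ (by positivity)]
      nlinarith [hstep k]
    have hupper : Tendsto (fun k => (f k - f (k + 1)) / (η * φ)) atTop (nhds 0) := by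
      simpa using hdiff.div_const (η * φ)
    exact squeeze_zero (fun k => sq_nonneg _) hub hupper
  have := hsq.sqrt
  simp only [Real.sqrt_zero] at this
  convert this using 2 with k
  rw [Real.sqrt_sq (norm_nonneg _)]
end

section
/- Let Γρ ∈ ℝ^{d×d} be symmetric, γτ > 0, v, gτ, t₀ ∈ ℝ^d, gρ, R₀ ∈ ℝ^{d×d} with R₀R₀ᵀ = I. Define h(R, t) = (1/2)tr((R − R₀)Γρ(R − R₀)ᵀ) + vᵀ(R − R₀)ᵀ(t − t₀) + (γτ/2)‖t − t₀‖² + tr(gρᵀ(R − R₀)) + gτᵀ(t − t₀), and θ = R₀(Γρ − (1/γτ)vvᵀ) + (1/γτ)gτvᵀ − gρ. Then: (a) for each fixed R ∈ ℝ^{d×d}, the function t ↦ h(R, t) is minimized over ℝ^d at t*(R) = t₀ − (1/γτ)(Rv − R₀v + gτ); and (b) there exists a constant c ∈ ℝ, independent of R, such that for every R ∈ ℝ^{d×d} with RRᵀ = I, min_{t∈ℝ^d} h(R, t) = c − tr(Rᵀθ). -/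
open Matrix

attribute [local instance] Matrix.frobeniusNormedAddCommGroup Matrix.frobeniusNormedSpace


lemma normsq_eq_trace {d : ℕ} (u : Matrix (Fin d) (Fin 1) ℝ) :
    ‖u‖ ^ 2 = Matrix.trace (uᵀ * u) := by
  rw [Matrix.frobenius_norm_def, ← Real.rpow_natCast _ 2,
    ← Real.rpow_mul (by positivity)]
  norm_num
  simp [Matrix.trace, Matrix.diag, Matrix.mul_apply, Finset.sum_comm, sq]

lemma tr_flip {m n : Type*} [Fintype m] [Fintype n]
    (A : Matrix m n ℝ) (B : Matrix n m ℝ) :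
    Matrix.trace (A * B) = Matrix.trace (Bᵀ * Aᵀ) := by
  rw [← Matrix.trace_transpose (A * B), Matrix.transpose_mul]

lemma quad_id {d : ℕ} (γ : ℝ) (hγ : γ ≠ 0) (w u : Matrix (Fin d) (Fin 1) ℝ) :
    Matrix.trace (wᵀ * u) + (γ / 2) * Matrix.trace (uᵀ * u)
      = (γ / 2) * Matrix.trace ((u + γ⁻¹ • w)ᵀ * (u + γ⁻¹ • w))
        - (2 * γ)⁻¹ * Matrix.trace (wᵀ * w) := by
  have huw : Matrix.trace (uᵀ * w) = Matrix.trace (wᵀ * u) := by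
    rw [tr_flip]; simp
  simp only [transpose_add, transpose_smul, Matrix.add_mul, Matrix.mul_add,
    Matrix.smul_mul, Matrix.mul_smul, trace_add, trace_smul, smul_eq_mul, smul_smul]
  rw [huw]
  field_simp
  ring

/-- Per-node subproblem reduction of GPM-PGO: for the per-node surrogate
`h(R,t) = (1/2)tr((R − R₀)Γρ(R − R₀)ᵀ) + vᵀ(R − R₀)ᵀ(t − t₀) + (γτ/2)‖t − t₀‖²
  + tr(gρᵀ(R − R₀)) + gτᵀ(t − t₀)`
(vectors represented as `d × 1` matrices), with
`θ = R₀(Γρ − (1/γτ)vvᵀ) + (1/γτ)gτvᵀ − gρ`: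
(a) for each fixed `R`, `t ↦ h(R,t)` is minimized at
`t*(R) = t₀ − (1/γτ)(Rv − R₀v + gτ)`; and
(b) there is a constant `c` independent of `R` with
`min_t h(R,t) = c − tr(Rᵀθ)` for every `R` with `RRᵀ = I`. -/
theorem per_node_subproblem_reduction {d : ℕ}
    (Γρ : Matrix (Fin d) (Fin d) ℝ) (hΓρ : Γρ.IsSymm)
    (γτ : ℝ) (hγτ : 0 < γτ)
    (v gτ t₀ : Matrix (Fin d) (Fin 1) ℝ)
    (gρ R₀ : Matrix (Fin d) (Fin d) ℝ) (hR₀ : R₀ * R₀ᵀ = 1)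
    (h : Matrix (Fin d) (Fin d) ℝ → Matrix (Fin d) (Fin 1) ℝ → ℝ)
    (hdef : ∀ R t, h R t =
      (1 / 2) * Matrix.trace ((R - R₀) * Γρ * (R - R₀)ᵀ)
        + Matrix.trace (vᵀ * ((R - R₀)ᵀ * (t - t₀)))
        + (γτ / 2) * ‖t - t₀‖ ^ 2
        + Matrix.trace (gρᵀ * (R - R₀))
        + Matrix.trace (gτᵀ * (t - t₀)))
    (θ : Matrix (Fin d) (Fin d) ℝ)
    (hθ : θ = R₀ * (Γρ - γτ⁻¹ • (v * vᵀ)) + γτ⁻¹ • (gτ * vᵀ) - gρ)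
    (tstar : Matrix (Fin d) (Fin d) ℝ → Matrix (Fin d) (Fin 1) ℝ)
    (htstar : ∀ R, tstar R = t₀ - γτ⁻¹ • (R * v - R₀ * v + gτ)) :
    (∀ R : Matrix (Fin d) (Fin d) ℝ, ∀ t : Matrix (Fin d) (Fin 1) ℝ,
      h R (tstar R) ≤ h R t) ∧
    ∃ c : ℝ, ∀ R : Matrix (Fin d) (Fin d) ℝ, R * Rᵀ = 1 →
      h R (tstar R) = c - Matrix.trace (Rᵀ * θ) := by
  have hγ : γτ ≠ 0 := ne_of_gt hγτ
  -- base form of h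
  have hbase : ∀ R t, h R t =
      ((1/2) * Matrix.trace ((R - R₀) * Γρ * (R - R₀)ᵀ)
        + Matrix.trace (gρᵀ * (R - R₀)))
      + (Matrix.trace (((R - R₀) * v + gτ)ᵀ * (t - t₀))
        + (γτ/2) * Matrix.trace ((t - t₀)ᵀ * (t - t₀))) := by
    intro R t
    rw [hdef, normsq_eq_trace]
    have h1 : vᵀ * ((R - R₀)ᵀ * (t - t₀)) = ((R - R₀) * v)ᵀ * (t - t₀) := by
      rw [Matrix.transpose_mul, Matrix.mul_assoc]
    rw [h1]
    simp only [transpose_add, Matrix.add_mul, trace_add]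
    ring
  -- displacement at the minimizer
  have hu : ∀ R, tstar R - t₀ = -(γτ⁻¹ • ((R - R₀) * v + gτ)) := by
    intro R
    rw [htstar, Matrix.sub_mul]
    abel
  -- value at the minimizer
  have hmin : ∀ R, h R (tstar R) =
      ((1/2) * Matrix.trace ((R - R₀) * Γρ * (R - R₀)ᵀ)
        + Matrix.trace (gρᵀ * (R - R₀)))
      - (2*γτ)⁻¹ * Matrix.trace (((R - R₀) * v + gτ)ᵀ * ((R - R₀) * v + gτ)) := by
    intro R
    rw [hbase, hu R]
    simp only [Matrix.mul_smul, mul_neg, Matrix.mul_neg, transpose_neg, transpose_smul,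
      Matrix.neg_mul, Matrix.smul_mul, trace_neg, trace_smul, smul_eq_mul, smul_smul,
      neg_neg]
    field_simp
    ring
  constructor
  · intro R t
    rw [hbase R t, hmin R]
    rw [quad_id γτ hγ ((R - R₀) * v + gτ) (t - t₀)]
    have hnn : 0 ≤ Matrix.trace (((t - t₀) + γτ⁻¹ • ((R - R₀) * v + gτ))ᵀ
        * ((t - t₀) + γτ⁻¹ • ((R - R₀) * v + gτ))) := by
      rw [← normsq_eq_trace]; positivity
    nlinarith
  · refine ⟨Matrix.trace Γρ - Matrix.trace (gρᵀ * R₀) - γτ⁻¹ * Matrix.trace (vᵀ * v)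
      + γτ⁻¹ * Matrix.trace (gτᵀ * (R₀ * v)) - (2*γτ)⁻¹ * Matrix.trace (gτᵀ * gτ), ?_⟩
    intro R hR
    have hRt : Rᵀ * R = 1 := mul_eq_one_comm.mp hR
    have hR₀t : R₀ᵀ * R₀ = 1 := mul_eq_one_comm.mp hR₀
    rw [hmin R, hθ]
    -- E1
    have p1 : Matrix.trace (R * Γρ * Rᵀ) = Matrix.trace Γρ := by
      rw [Matrix.trace_mul_cycle, hRt, Matrix.one_mul]
    have p2 : Matrix.trace (R₀ * Γρ * R₀ᵀ) = Matrix.trace Γρ := by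
      rw [Matrix.trace_mul_cycle, hR₀t, Matrix.one_mul]
    have p3 : Matrix.trace (R₀ * Γρ * Rᵀ) = Matrix.trace (Rᵀ * (R₀ * Γρ)) := by
      rw [Matrix.trace_mul_cycle R₀ Γρ Rᵀ, Matrix.mul_assoc]
    have p4 : Matrix.trace (R * Γρ * R₀ᵀ) = Matrix.trace (Rᵀ * (R₀ * Γρ)) := by
      rw [tr_flip (R * Γρ) R₀ᵀ, transpose_transpose, transpose_mul, hΓρ,
        ← Matrix.mul_assoc]
      exact p3
    have E1 : Matrix.trace ((R - R₀) * Γρ * (R - R₀)ᵀ)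
        = 2 * Matrix.trace Γρ - 2 * Matrix.trace (Rᵀ * (R₀ * Γρ)) := by
      simp only [Matrix.sub_mul, Matrix.mul_sub, transpose_sub, trace_sub]
      linarith [p1, p2, p3, p4]
    -- E3
    have p5 : Matrix.trace (gρᵀ * R) = Matrix.trace (Rᵀ * gρ) := by
      rw [tr_flip, transpose_transpose]
    have E3 : Matrix.trace (gρᵀ * (R - R₀))
        = Matrix.trace (Rᵀ * gρ) - Matrix.trace (gρᵀ * R₀) := by
      simp only [Matrix.mul_sub, trace_sub, p5]
    -- E2
    have key : (R - R₀)ᵀ * (R - R₀)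
        = (2:ℝ) • (1 : Matrix (Fin d) (Fin d) ℝ) - (Rᵀ * R₀ + R₀ᵀ * R) := by
      simp only [transpose_sub, Matrix.sub_mul, Matrix.mul_sub, hRt, hR₀t, two_smul]
      abel
    have q0 : Matrix.trace (((R - R₀) * v)ᵀ * ((R - R₀) * v))
        = Matrix.trace (((R - R₀)ᵀ * (R - R₀)) * (v * vᵀ)) := by
      rw [transpose_mul, Matrix.mul_assoc, Matrix.trace_mul_comm,
        ← Matrix.mul_assoc, ← Matrix.mul_assoc, Matrix.mul_assoc ((R - R₀)ᵀ * (R - R₀)) v vᵀ]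
    have q1 : Matrix.trace (v * vᵀ) = Matrix.trace (vᵀ * v) := Matrix.trace_mul_comm v vᵀ
    have q2 : Matrix.trace ((Rᵀ * R₀) * (v * vᵀ)) = Matrix.trace (Rᵀ * (R₀ * (v * vᵀ))) := by
      rw [Matrix.mul_assoc]
    have q3 : Matrix.trace ((R₀ᵀ * R) * (v * vᵀ)) = Matrix.trace (Rᵀ * (R₀ * (v * vᵀ))) := by
      rw [tr_flip (R₀ᵀ * R) (v * vᵀ), transpose_mul, transpose_mul, transpose_transpose,
        transpose_transpose, Matrix.trace_mul_comm, Matrix.mul_assoc]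
    have qa : Matrix.trace (((R - R₀) * v)ᵀ * ((R - R₀) * v))
        = 2 * Matrix.trace (vᵀ * v) - 2 * Matrix.trace (Rᵀ * (R₀ * (v * vᵀ))) := by
      rw [q0, key]
      simp only [Matrix.sub_mul, Matrix.add_mul, Matrix.smul_mul, Matrix.one_mul,
        trace_sub, trace_add, trace_smul, smul_eq_mul]
      linarith [q1, q2, q3]
    have q4 : Matrix.trace (gτᵀ * (R * v)) = Matrix.trace (Rᵀ * (gτ * vᵀ)) := by
      rw [Matrix.trace_mul_comm, Matrix.mul_assoc, tr_flip R (v * gτᵀ), transpose_mul,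
        transpose_transpose, Matrix.trace_mul_comm]
    have qb : Matrix.trace (gτᵀ * ((R - R₀) * v))
        = Matrix.trace (Rᵀ * (gτ * vᵀ)) - Matrix.trace (gτᵀ * (R₀ * v)) := by
      rw [Matrix.sub_mul, Matrix.mul_sub, trace_sub, q4]
    have qflip : Matrix.trace (((R - R₀) * v)ᵀ * gτ)
        = Matrix.trace (gτᵀ * ((R - R₀) * v)) := by
      rw [tr_flip, transpose_transpose]
    have E2 : Matrix.trace (((R - R₀) * v + gτ)ᵀ * ((R - R₀) * v + gτ))
        = 2 * Matrix.trace (vᵀ * v) - 2 * Matrix.trace (Rᵀ * (R₀ * (v * vᵀ)))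
          + 2 * (Matrix.trace (Rᵀ * (gτ * vᵀ)) - Matrix.trace (gτᵀ * (R₀ * v)))
          + Matrix.trace (gτᵀ * gτ) := by
      simp only [transpose_add, Matrix.add_mul, Matrix.mul_add, trace_add]
      rw [qflip, qa, qb]
      ring
    -- Eθ
    have Eθ : Matrix.trace (Rᵀ * (R₀ * (Γρ - γτ⁻¹ • (v * vᵀ)) + γτ⁻¹ • (gτ * vᵀ) - gρ))
        = Matrix.trace (Rᵀ * (R₀ * Γρ)) - γτ⁻¹ * Matrix.trace (Rᵀ * (R₀ * (v * vᵀ)))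
          + γτ⁻¹ * Matrix.trace (Rᵀ * (gτ * vᵀ)) - Matrix.trace (Rᵀ * gρ) := by
      simp only [Matrix.mul_sub, Matrix.mul_add, Matrix.mul_smul, trace_sub, trace_add,
        trace_smul, smul_eq_mul]
    rw [E1, E3, E2, Eθ]
    field_simp
    ring
end
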